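/- arXiv:1803.02971 — 2 statements merged into one kernel-verified Lean document; each statement's English description precedes it below -/
import Mathlib

section
/- Let N ≥ 2, Ω ⊂ ℝ^N bounded with 0 ∈ Ω, R = sup_{x∈Ω}|x|, a ≥ 1, and A symmetric positive definite with α₁|x|² ≤ xᵀAx ≤ α₂|x|² on Ω. For γ < (N−1)/N and small ε > 0 with B(ε) ⊂ Ω, let φ_{γ,ε}(x) = (log(aR/|x|))^γ ξ_ε(x) where ξ_ε ∈ C_c^∞(B(ε)), 0 ≤ ξ_ε ≤ 1, ξ_ε ≡ 1 on B(ε/2). Then ∫_Ω |φ_{γ,ε}|^N / (|x|^N (log(aR/|x|))^N) ρ_A dx ≥ c·exp(−(α₂^{N/2}/N)(ε/2)^N)·(ω_N/N)·(log(2aR/ε))^{N(γ−(N−1)/N)}·((N−1)/N − γ)^{−1}, where ω_N is the surface area of the unit sphere in ℝ^N and ρ_A(x) = c·exp(−(1/N)(xᵀAx)^{N/2}). -/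
open MeasureTheory Real

lemma measurable_rpow_const' (q : ℝ) : Measurable fun x : ℝ => x ^ q :=
  measurable_of_continuousOn_compl_singleton 0
    (fun x hx => (continuousAt_rpow_const x q (Or.inl hx)).continuousWithinAt)

lemma exp_image_Ioi' (b s : ℝ) (hb : 0 < b) (hs : 0 < s) (hsb : s < b) :
    (fun t => b * Real.exp (-t)) '' (Set.Ioi (Real.log (b/s))) = Set.Ioo 0 s := by
  ext y
  constructor
  · rintro ⟨t, ht, rfl⟩
    have h1 : Real.exp (-t) < Real.exp (-(Real.log (b/s))) :=
      Real.exp_lt_exp.2 (by simpa using ht)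
    have h2 : Real.exp (-(Real.log (b/s))) = s / b := by
      rw [Real.exp_neg, Real.exp_log (by positivity)]
      field_simp
    constructor
    · positivity
    · calc b * Real.exp (-t) < b * (s / b) := by
            rw [h2] at h1; exact (mul_lt_mul_iff_right₀ hb).2 h1
        _ = s := by field_simp
  · rintro ⟨hy0, hys⟩
    refine ⟨Real.log (b / y), ?_, ?_⟩
    · exact Real.log_lt_log (by positivity) (div_lt_div_of_pos_left hb hy0 hys)
    · show b * Real.exp (-(Real.log (b/y))) = y
      rw [Real.exp_neg, Real.exp_log (by positivity)]
      field_simp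

lemma key1d' (b s p : ℝ) (hb : 0 < b) (hs : 0 < s) (hsb : s < b) (hp : p < -1) :
    IntegrableOn (fun r => Real.log (b/r) ^ p / r) (Set.Ioo 0 s) ∧
    ∫ r in Set.Ioo 0 s, Real.log (b/r) ^ p / r = -(Real.log (b/s)) ^ (p+1) / (p+1) := by
  set L₀ := Real.log (b/s) with hL₀def
  have hL₀ : 0 < L₀ := Real.log_pos (by rw [lt_div_iff₀ hs]; linarith)
  have himg : (fun t => b * Real.exp (-t)) '' (Set.Ioi L₀) = Set.Ioo 0 s :=
    exp_image_Ioi' b s hb hs hsb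
  have hderiv : ∀ t ∈ Set.Ioi L₀, HasDerivWithinAt (fun t => b * Real.exp (-t))
      (-(b * Real.exp (-t))) (Set.Ioi L₀) t := by
    intro t _
    have : HasDerivAt (fun t => b * Real.exp (-t)) (b * (Real.exp (-t) * (-1))) t :=
      (((Real.hasDerivAt_exp (-t)).comp t (hasDerivAt_neg t))).const_mul b
    rw [show -(b * Real.exp (-t)) = b * (Real.exp (-t) * (-1)) by ring]
    exact this.hasDerivWithinAt
  have hinj : Set.InjOn (fun t => b * Real.exp (-t)) (Set.Ioi L₀) := by
    intro x _ y _ h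
    have := mul_left_cancel₀ hb.ne' h
    have := Real.exp_injective this
    linarith [neg_injective this]
  have hcongr : ∀ t ∈ Set.Ioi L₀,
      |(-(b * Real.exp (-t)))| • (Real.log (b/(b * Real.exp (-t))) ^ p / (b * Real.exp (-t)))
        = t ^ p := by
    intro t ht
    have he : (0:ℝ) < b * Real.exp (-t) := by positivity
    have hbd : b / (b * Real.exp (-t)) = Real.exp t := by
      rw [Real.exp_neg]
      field_simp
    rw [hbd, Real.log_exp, abs_of_neg (by linarith), smul_eq_mul]
    field_simp
  constructor
  · rw [← himg, integrableOn_image_iff_integrableOn_abs_deriv_smul measurableSet_Ioi hderiv hinj]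
    exact (integrableOn_Ioi_rpow_of_lt hp hL₀).congr_fun
      (fun t ht => (hcongr t ht).symm) measurableSet_Ioi
  · rw [← himg, integral_image_eq_integral_abs_deriv_smul measurableSet_Ioi hderiv hinj,
      setIntegral_congr_fun measurableSet_Ioi hcongr, integral_Ioi_rpow_of_lt hp hL₀]

lemma integrable_comp_norm' {N : ℕ} (hN : 1 ≤ N) {f : ℝ → ℝ} (hm : Measurable f)
    (hf : IntegrableOn (fun y => y ^ (N - 1) * f y) (Set.Ioi (0:ℝ))) :
    Integrable (fun x : EuclideanSpace ℝ (Fin N) => f ‖x‖) := by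
  haveI : Nonempty (Fin N) := ⟨⟨0, hN⟩⟩
  haveI : Nontrivial (EuclideanSpace ℝ (Fin N)) := by
    refine ⟨⟨0, EuclideanSpace.single ⟨0, hN⟩ 1, fun h => ?_⟩⟩
    have := congrArg (fun v : EuclideanSpace ℝ (Fin N) => v ⟨0, hN⟩) h
    simp [EuclideanSpace.single_apply] at this
  set E := EuclideanSpace ℝ (Fin N)
  set μ : Measure E := volume with hμ
  have hdim : Module.finrank ℝ E = N := finrank_euclideanSpace_fin
  have h5 : Integrable (f ∘ Subtype.val)
      (Measure.volumeIoiPow (Module.finrank ℝ E - 1)) := by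
    rw [Measure.volumeIoiPow, integrable_withDensity_iff
      (by exact (measurable_subtype_coe.pow_const _).ennreal_ofReal)
      (Filter.Eventually.of_forall fun x => ENNReal.ofReal_lt_top)]
    have heq : (fun x : Set.Ioi (0:ℝ) =>
        (f ∘ Subtype.val) x * (ENNReal.ofReal (x.1 ^ (Module.finrank ℝ E - 1))).toReal)
        = (fun y : ℝ => y ^ (N - 1) * f y) ∘ Subtype.val := by
      funext x
      have hx : (0:ℝ) < x.1 := x.2
      simp only [Function.comp_apply, hdim]
      rw [ENNReal.toReal_ofReal (by positivity)]
      ring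
    rw [heq]
    have hemb : MeasurableEmbedding (Subtype.val : Set.Ioi (0:ℝ) → ℝ) :=
      MeasurableEmbedding.subtype_coe measurableSet_Ioi
    rw [← hemb.integrable_map_iff, map_comap_subtype_coe measurableSet_Ioi]
    exact hf
  have h4 : Integrable (f ∘ Subtype.val ∘ Prod.snd)
      ((μ.toSphere).prod (Measure.volumeIoiPow (Module.finrank ℝ E - 1))) := by
    have hbm : AEStronglyMeasurable (f ∘ Subtype.val)
        ((Measure.volumeIoiPow (Module.finrank ℝ E - 1))) :=
      (hm.comp measurable_subtype_coe).aestronglyMeasurable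
    have hmap : Measure.map Prod.snd
        ((μ.toSphere).prod (Measure.volumeIoiPow (Module.finrank ℝ E - 1)))
        = (μ.toSphere Set.univ) • (Measure.volumeIoiPow (Module.finrank ℝ E - 1)) :=
      Measure.map_snd_prod
    have h0 : μ.toSphere Set.univ ≠ 0 := by
      rw [Measure.toSphere_apply_univ]
      refine mul_ne_zero ?_ ?_
      · simp [hdim]; omega
      · exact (Metric.measure_ball_pos μ 0 one_pos).ne'
    have htop : μ.toSphere Set.univ ≠ ⊤ := (measure_lt_top _ _).ne
    have : Integrable (f ∘ Subtype.val)
        ((μ.toSphere Set.univ) • (Measure.volumeIoiPow (Module.finrank ℝ E - 1))) :=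
      (integrable_smul_measure h0 htop).2 h5
    rw [← hmap] at this
    refine (integrable_map_measure ?_ measurable_snd.aemeasurable).1 this
    rw [hmap]
    exact hbm.smul_measure _
  have h3 : Integrable (fun x : ({(0:E)}ᶜ : Set E) => f ‖x.1‖) (μ.comap Subtype.val) := by
    have := (μ.measurePreserving_homeomorphUnitSphereProd).integrable_comp
      (g := f ∘ Subtype.val ∘ Prod.snd)
      ((hm.comp (measurable_subtype_coe.comp measurable_snd)).aestronglyMeasurable)
    exact (this.2 h4).congr (Filter.Eventually.of_forall fun x => by simp)
  have hemb0 : MeasurableEmbedding (Subtype.val : ({(0:E)}ᶜ : Set E) → E) :=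
    MeasurableEmbedding.subtype_coe (measurableSet_singleton _).compl
  have h2 : Integrable (fun x : E => f ‖x‖) (μ.restrict {(0:E)}ᶜ) := by
    rw [← map_comap_subtype_coe (measurableSet_singleton (0:E)).compl,
      hemb0.integrable_map_iff]
    exact h3
  rwa [restrict_compl_singleton] at h2

set_option maxHeartbeats 1000000 in
theorem stmt_13 (N : ℕ) (hN : 2 ≤ N)
    (Ω : Set (EuclideanSpace ℝ (Fin N))) (hΩopen : IsOpen Ω) (hΩconn : IsConnected Ω)
    (hΩbdd : Bornology.IsBounded Ω) (h0 : (0 : EuclideanSpace ℝ (Fin N)) ∈ Ω)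
    (R : ℝ) (hR : R = sSup ((fun x => ‖x‖) '' Ω))
    (a : ℝ) (ha : 1 ≤ a)
    (A : Matrix (Fin N) (Fin N) ℝ) (hAsymm : A.IsSymm) (hA : A.PosDef)
    (α₁ α₂ : ℝ) (hα₁ : 0 < α₁)
    (hbounds : ∀ x : EuclideanSpace ℝ (Fin N),
      α₁ * ‖x‖ ^ 2 ≤ ∑ i, ∑ j, A i j * x i * x j ∧
      ∑ i, ∑ j, A i j * x i * x j ≤ α₂ * ‖x‖ ^ 2)
    (c : ℝ) (hc : 0 < c)
    (ρ : EuclideanSpace ℝ (Fin N) → ℝ)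
    (hρ : ∀ x, ρ x = c * Real.exp (-(1 / (N : ℝ)) *
      (∑ i, ∑ j, A i j * x i * x j) ^ ((N : ℝ) / 2)))
    (γ : ℝ) (hγ : γ < ((N : ℝ) - 1) / N)
    (ε : ℝ) (hε : 0 < ε) (hball : Metric.ball (0 : EuclideanSpace ℝ (Fin N)) ε ⊆ Ω)
    (ξ : EuclideanSpace ℝ (Fin N) → ℝ)
    (hξsmooth : ContDiff ℝ (⊤ : ℕ∞) ξ) (hξsupp : HasCompactSupport ξ)
    (hξball : tsupport ξ ⊆ Metric.ball (0 : EuclideanSpace ℝ (Fin N)) ε)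
    (hξ01 : ∀ x, 0 ≤ ξ x ∧ ξ x ≤ 1)
    (hξone : ∀ x ∈ Metric.ball (0 : EuclideanSpace ℝ (Fin N)) (ε / 2), ξ x = 1)
    (φ : EuclideanSpace ℝ (Fin N) → ℝ)
    (hφ : ∀ x, φ x = (Real.log (a * R / ‖x‖)) ^ γ * ξ x)
    (ωN : ℝ)
    (hωN : ωN = N * (volume (Metric.ball (0 : EuclideanSpace ℝ (Fin N)) 1)).toReal) :
    c * Real.exp (-(α₂ ^ ((N : ℝ) / 2) / N) * (ε / 2) ^ N) * (ωN / N) *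
        (Real.log (2 * a * R / ε)) ^ ((N : ℝ) * (γ - ((N : ℝ) - 1) / N)) *
        (((N : ℝ) - 1) / N - γ)⁻¹ ≤
      ∫ x in Ω, |φ x| ^ N / (‖x‖ ^ N * (Real.log (a * R / ‖x‖)) ^ N) * ρ x := by
  have hN1 : 1 ≤ N := by omega
  have hN0 : N ≠ 0 := by omega
  have hNR : (0:ℝ) < N := by exact_mod_cast Nat.pos_of_ne_zero hN0
  have hNR0 : (N:ℝ) ≠ 0 := hNR.ne'
  -- basic facts about R
  have hbdd : BddAbove ((fun x : EuclideanSpace ℝ (Fin N) => ‖x‖) '' Ω) := by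
    obtain ⟨C, hC⟩ := hΩbdd.exists_norm_le
    exact ⟨C, by rintro _ ⟨x, hx, rfl⟩; exact hC x hx⟩
  have hnormR : ∀ x ∈ Ω, ‖x‖ ≤ R := fun x hx => by
    rw [hR]; exact le_csSup hbdd ⟨x, hx, rfl⟩
  have hR0' : (0:ℝ) ≤ R := by simpa using hnormR 0 h0
  have hεR : ε ≤ R := by
    by_contra hcon
    push_neg at hcon
    set t := (R + ε)/2 with ht
    have htε : t < ε := by rw [ht]; linarith
    have ht0 : 0 ≤ t := by rw [ht]; linarith
    have hmem : (EuclideanSpace.single (⟨0, by omega⟩ : Fin N) t : EuclideanSpace ℝ (Fin N)) ∈ Ω := by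
      apply hball
      rw [mem_ball_zero_iff, EuclideanSpace.norm_single, Real.norm_eq_abs, abs_of_nonneg ht0]
      exact htε
    have := hnormR _ hmem
    rw [EuclideanSpace.norm_single, Real.norm_eq_abs, abs_of_nonneg ht0] at this
    rw [ht] at this
    linarith
  have hR0 : 0 < R := lt_of_lt_of_le hε hεR
  have hεaR : ε ≤ a * R := le_trans hεR (by nlinarith)
  have haR : 0 < a * R := by nlinarith
  have hRaR : R ≤ a * R := by nlinarith
  -- α₂ positivity
  have hα₂0 : (0:ℝ) ≤ α₂ := by
    have h1 := hbounds (EuclideanSpace.single (⟨0, by omega⟩ : Fin N) (1:ℝ))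
    rw [EuclideanSpace.norm_single] at h1
    simp only [norm_one, one_pow, mul_one] at h1
    linarith
  -- exponents
  set p : ℝ := (N:ℝ) * γ - N with hpdef
  have hp : p < -1 := by
    have := (lt_div_iff₀ hNR).1 hγ
    rw [hpdef]; nlinarith
  have hp1ne : p + 1 ≠ 0 := by linarith
  have hβ : 0 < ((N:ℝ) - 1) / N - γ := by linarith
  -- support radius ε₁
  obtain ⟨z, hzK, hzmax⟩ := hξsupp.exists_isMaxOn
    ⟨0, subset_tsupport ξ (by
      simp only [Function.mem_support]
      rw [hξone 0 (by simp [mem_ball_zero_iff, hε])]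
      norm_num)⟩
    continuous_norm.continuousOn
  set m := ‖z‖ with hm
  have hmε : m < ε := by
    have := hξball hzK
    rwa [mem_ball_zero_iff] at this
  have hm0 : 0 ≤ m := norm_nonneg z
  set ε₁ := (m + ε)/2 with hε₁def
  have hε₁pos : 0 < ε₁ := by rw [hε₁def]; linarith
  have hε₁ε : ε₁ < ε := by rw [hε₁def]; linarith
  have hmε₁ : m < ε₁ := by rw [hε₁def]; linarith
  have hξzero : ∀ x : EuclideanSpace ℝ (Fin N), ε₁ ≤ ‖x‖ → ξ x = 0 := by
    intro x hx
    apply image_eq_zero_of_notMem_tsupport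
    intro hxK
    have h2 : ‖x‖ ≤ m := hzmax hxK
    linarith
  -- ρ bounds
  have hρnn : ∀ x : EuclideanSpace ℝ (Fin N), 0 ≤ ρ x := fun x => by rw [hρ]; positivity
  have hS0 : ∀ x : EuclideanSpace ℝ (Fin N), (0:ℝ) ≤ ∑ i, ∑ j, A i j * x i * x j := fun x =>
    le_trans (by positivity) (hbounds x).1
  have hρle : ∀ x : EuclideanSpace ℝ (Fin N), ρ x ≤ c := by
    intro x
    rw [hρ]
    have : Real.exp (-(1 / (N : ℝ)) * (∑ i, ∑ j, A i j * x i * x j) ^ ((N : ℝ) / 2)) ≤ 1 := by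
      rw [Real.exp_le_one_iff]
      have h1 : (0:ℝ) ≤ (∑ i, ∑ j, A i j * x i * x j) ^ ((N : ℝ) / 2) :=
        Real.rpow_nonneg (hS0 x) _
      have h2 : (0:ℝ) ≤ 1 / (N:ℝ) := by positivity
      nlinarith
    nlinarith [hρnn x]
  set Eε := Real.exp (-(α₂ ^ ((N : ℝ) / 2) / N) * (ε / 2) ^ N) with hEεdef
  have hEε0 : 0 < Eε := Real.exp_pos _
  have hρge : ∀ x : EuclideanSpace ℝ (Fin N), ‖x‖ ≤ ε/2 → c * Eε ≤ ρ x := by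
    intro x hx
    rw [hρ, hEεdef]
    refine mul_le_mul_of_nonneg_left ?_ hc.le
    rw [Real.exp_le_exp]
    have hkey : (∑ i, ∑ j, A i j * x i * x j) ^ ((N : ℝ) / 2)
        ≤ α₂ ^ ((N : ℝ) / 2) * (ε/2) ^ N := by
      calc (∑ i, ∑ j, A i j * x i * x j) ^ ((N : ℝ) / 2)
          ≤ (α₂ * ‖x‖ ^ 2) ^ ((N : ℝ) / 2) :=
            Real.rpow_le_rpow (hS0 x) (hbounds x).2 (by positivity)
        _ = α₂ ^ ((N : ℝ) / 2) * (‖x‖ ^ 2) ^ ((N : ℝ) / 2) :=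
            Real.mul_rpow hα₂0 (by positivity)
        _ = α₂ ^ ((N : ℝ) / 2) * ‖x‖ ^ N := by
            congr 1
            rw [← Real.rpow_natCast ‖x‖ 2, ← Real.rpow_mul (norm_nonneg x),
              show ((2:ℕ):ℝ) * ((N:ℝ)/2) = (N:ℝ) by push_cast; ring,
              Real.rpow_natCast]
        _ ≤ α₂ ^ ((N : ℝ) / 2) * (ε/2) ^ N := by
            refine mul_le_mul_of_nonneg_left ?_ (Real.rpow_nonneg hα₂0 _)
            exact pow_le_pow_left₀ (norm_nonneg x) hx N
    have h2 : (0:ℝ) ≤ 1 / (N:ℝ) := by positivity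
    calc -(α₂ ^ ((N : ℝ) / 2) / N) * (ε / 2) ^ N
        = -(1/(N:ℝ)) * (α₂ ^ ((N : ℝ) / 2) * (ε/2) ^ N) := by ring
      _ ≤ -(1 / (N : ℝ)) * (∑ i, ∑ j, A i j * x i * x j) ^ ((N : ℝ) / 2) := by
          rw [neg_mul, neg_mul, neg_le_neg_iff]
          exact mul_le_mul_of_nonneg_left hkey h2
  -- the integrand
  set F : EuclideanSpace ℝ (Fin N) → ℝ := fun x => |φ x| ^ N / (‖x‖ ^ N * (Real.log (a * R / ‖x‖)) ^ N) * ρ x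
    with hFdef
  have hlognn : ∀ x ∈ Ω, 0 ≤ Real.log (a * R / ‖x‖) := by
    intro x hx
    rcases eq_or_lt_of_le (norm_nonneg x) with h | h
    · rw [← h]; simp
    · exact Real.log_nonneg ((one_le_div h).2 (le_trans (hnormR x hx) hRaR))
  have hF0 : ∀ x ∈ Ω, 0 ≤ F x := by
    intro x hx
    rw [hFdef]
    exact mul_nonneg (div_nonneg (by positivity)
      (mul_nonneg (by positivity) (pow_nonneg (hlognn x hx) N))) (hρnn x)
  -- key computation of F on the punctured ball
  have hFeq : ∀ x : EuclideanSpace ℝ (Fin N), 0 < ‖x‖ → ‖x‖ < ε →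
      F x = Real.log (a * R / ‖x‖) ^ p / ‖x‖ ^ N * ((ξ x) ^ N * ρ x) := by
    intro x hx0 hxε
    set L := Real.log (a * R / ‖x‖) with hLdef
    have hL : 0 < L := Real.log_pos ((one_lt_div hx0).2 (lt_of_lt_of_le hxε hεaR))
    have habs : |φ x| = L ^ γ * ξ x := by
      rw [hφ x, ← hLdef]
      exact abs_of_nonneg (mul_nonneg (Real.rpow_nonneg hL.le γ) (hξ01 x).1)
    have hpow : |φ x| ^ N = L ^ p * L ^ (N:ℝ) * (ξ x) ^ N := by
      rw [habs, mul_pow, ← Real.rpow_natCast (L ^ γ) N, ← Real.rpow_mul hL.le,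
        show γ * (N:ℝ) = p + N by rw [hpdef]; ring, Real.rpow_add hL]
    rw [hFdef]
    simp only
    rw [hpow, ← Real.rpow_natCast L N]
    have hLpow : (0:ℝ) < L ^ (N:ℝ) := Real.rpow_pos_of_pos hL _
    have hxpow : (0:ℝ) < ‖x‖ ^ N := by positivity
    field_simp
  -- radial minorant and majorant
  set g : ℝ → ℝ :=
    Set.indicator (Set.Ioo (0:ℝ) (ε/2)) (fun r => Real.log (a*R/r) ^ p / r ^ N) with hgdef
  set G : ℝ → ℝ :=
    Set.indicator (Set.Ioo (0:ℝ) ε₁) (fun r => Real.log (a*R/r) ^ p / r ^ N) with hGdef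
  have hmbase : Measurable fun r : ℝ => Real.log (a*R/r) ^ p / r ^ N :=
    ((measurable_rpow_const' p).comp
      (Real.measurable_log.comp (measurable_const.div measurable_id))).div
      (measurable_id.pow_const N)
  have hgm : Measurable g := hmbase.indicator measurableSet_Ioo
  have hGm : Measurable G := hmbase.indicator measurableSet_Ioo
  have hrad : ∀ s : ℝ, 0 < s → s < a*R → ∀ y : ℝ,
      y ^ (N-1) * Set.indicator (Set.Ioo (0:ℝ) s) (fun r => Real.log (a*R/r) ^ p / r ^ N) y
      = Set.indicator (Set.Ioo (0:ℝ) s) (fun r => Real.log (a*R/r) ^ p / r) y := by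
    intro s hs hsaR y
    by_cases hy : y ∈ Set.Ioo (0:ℝ) s
    · rw [Set.indicator_of_mem hy, Set.indicator_of_mem hy]
      have hy0 : (0:ℝ) < y := hy.1
      have hyne : y ^ (N-1) ≠ 0 := pow_ne_zero _ hy0.ne'
      have hyN : y ^ N = y * y ^ (N-1) := by
        conv_lhs => rw [show N = (N-1)+1 from by omega]
        rw [pow_succ']
      rw [hyN, ← div_div, mul_comm, div_mul_cancel₀ _ hyne]
    · rw [Set.indicator_of_notMem hy, Set.indicator_of_notMem hy, mul_zero]
  have hε2pos : 0 < ε/2 := by linarith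
  have hε2aR : ε/2 < a*R := lt_of_lt_of_le (by linarith) hεaR
  have hε₁aR : ε₁ < a*R := lt_of_lt_of_le hε₁ε hεaR
  -- integrability of radial comparison functions
  have hgrad : IntegrableOn (fun y : ℝ => y ^ (N-1) * g y) (Set.Ioi (0:ℝ)) := by
    rw [hgdef, show (fun y : ℝ => y ^ (N-1) *
        Set.indicator (Set.Ioo (0:ℝ) (ε/2)) (fun r => Real.log (a*R/r) ^ p / r ^ N) y)
        = Set.indicator (Set.Ioo (0:ℝ) (ε/2)) (fun r => Real.log (a*R/r) ^ p / r)
        from funext (hrad (ε/2) hε2pos hε2aR)]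
    exact ((integrable_indicator_iff measurableSet_Ioo).2
      (key1d' (a*R) (ε/2) p haR hε2pos hε2aR hp).1).integrableOn
  have hGrad : IntegrableOn (fun y : ℝ => y ^ (N-1) * G y) (Set.Ioi (0:ℝ)) := by
    rw [hGdef, show (fun y : ℝ => y ^ (N-1) *
        Set.indicator (Set.Ioo (0:ℝ) ε₁) (fun r => Real.log (a*R/r) ^ p / r ^ N) y)
        = Set.indicator (Set.Ioo (0:ℝ) ε₁) (fun r => Real.log (a*R/r) ^ p / r)
        from funext (hrad ε₁ hε₁pos hε₁aR)]
    exact ((integrable_indicator_iff measurableSet_Ioo).2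
      (key1d' (a*R) ε₁ p haR hε₁pos hε₁aR hp).1).integrableOn
  have hgint : Integrable (fun x : EuclideanSpace ℝ (Fin N) => g ‖x‖) := integrable_comp_norm' hN1 hgm hgrad
  have hGint : Integrable (fun x : EuclideanSpace ℝ (Fin N) => G ‖x‖) := integrable_comp_norm' hN1 hGm hGrad
  -- pointwise bounds
  have hup : ∀ x : EuclideanSpace ℝ (Fin N), F x ≤ c * G ‖x‖ := by
    intro x
    rcases eq_or_lt_of_le (norm_nonneg x) with hx0 | hx0
    · rw [hFdef]
      simp only
      rw [← hx0, hGdef]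
      rw [Set.indicator_of_notMem (by simp [Set.mem_Ioo])]
      simp [zero_pow hN0]
    · by_cases hx1 : ‖x‖ < ε₁
      · rw [hFeq x hx0 (lt_trans hx1 hε₁ε), hGdef,
          Set.indicator_of_mem (Set.mem_Ioo.2 ⟨hx0, hx1⟩)]
        have hL : 0 < Real.log (a * R / ‖x‖) :=
          Real.log_pos ((one_lt_div hx0).2 (lt_of_lt_of_le (lt_trans hx1 hε₁ε) hεaR))
        have hnn : (0:ℝ) ≤ Real.log (a * R / ‖x‖) ^ p / ‖x‖ ^ N :=
          div_nonneg (Real.rpow_nonneg hL.le p) (by positivity)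
        rw [mul_comm c _]
        refine mul_le_mul_of_nonneg_left ?_ hnn
        calc (ξ x) ^ N * ρ x ≤ 1 * c :=
            mul_le_mul (pow_le_one₀ (hξ01 x).1 (hξ01 x).2) (hρle x) (hρnn x) zero_le_one
          _ = c := one_mul c
      · push_neg at hx1
        rw [hFdef]
        simp only
        rw [hφ x, hξzero x hx1, mul_zero, abs_zero, zero_pow hN0, zero_div, zero_mul,
          hGdef, Set.indicator_of_notMem (by simp [Set.mem_Ioo]; intro h; linarith),
          mul_zero]
  have hlow : ∀ x ∈ Ω, c * Eε * g ‖x‖ ≤ F x := by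
    intro x hx
    by_cases hmem : ‖x‖ ∈ Set.Ioo (0:ℝ) (ε/2)
    · rw [hFeq x hmem.1 (lt_trans hmem.2 (by linarith)), hgdef,
        Set.indicator_of_mem hmem]
      rw [hξone x (mem_ball_zero_iff.2 hmem.2), one_pow, one_mul]
      have hL : 0 < Real.log (a * R / ‖x‖) :=
        Real.log_pos ((one_lt_div hmem.1).2 (lt_of_lt_of_le (lt_trans hmem.2 (by linarith)) hεaR))
      have hnn : (0:ℝ) ≤ Real.log (a * R / ‖x‖) ^ p / ‖x‖ ^ N :=
        div_nonneg (Real.rpow_nonneg hL.le p) (by positivity)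
      rw [mul_comm (c * Eε) _]
      exact mul_le_mul_of_nonneg_left (hρge x hmem.2.le) hnn
    · rw [hgdef, Set.indicator_of_notMem hmem, mul_zero]
      exact hF0 x hx
  -- measurability of F
  have hmnorm : Measurable fun x : EuclideanSpace ℝ (Fin N) => ‖x‖ := measurable_norm
  have hmlog : Measurable fun x : EuclideanSpace ℝ (Fin N) => Real.log (a * R / ‖x‖) :=
    Real.measurable_log.comp (measurable_const.div hmnorm)
  have hmcoord : ∀ i : Fin N, Measurable fun x : EuclideanSpace ℝ (Fin N) => x i := fun i =>
    (EuclideanSpace.proj (𝕜 := ℝ) i).continuous.measurable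
  have hmQ : Measurable fun x : EuclideanSpace ℝ (Fin N) => ∑ i, ∑ j, A i j * x i * x j := by
    apply Finset.measurable_sum
    intro i _
    apply Finset.measurable_sum
    intro j _
    exact (measurable_const.mul (hmcoord i)).mul (hmcoord j)
  have hmρ : Measurable ρ := by
    rw [show ρ = fun x => c * Real.exp (-(1 / (N : ℝ)) *
      (∑ i, ∑ j, A i j * x i * x j) ^ ((N : ℝ) / 2)) from funext hρ]
    exact measurable_const.mul
      (Real.measurable_exp.comp (((measurable_rpow_const' _).comp hmQ).const_mul _))
  have hmφ : Measurable φ := by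
    rw [show φ = fun x => (Real.log (a * R / ‖x‖)) ^ γ * ξ x from funext hφ]
    exact ((measurable_rpow_const' γ).comp hmlog).mul hξsmooth.continuous.measurable
  have hmF : Measurable F := by
    rw [hFdef]
    exact ((hmφ.abs.pow_const N).div
      ((hmnorm.pow_const N).mul (hmlog.pow_const N))).mul hmρ
  -- integrability of F on Ω
  have hFint : IntegrableOn F Ω := by
    refine Integrable.mono' ((hGint.const_mul c).restrict) hmF.aestronglyMeasurable ?_
    filter_upwards [ae_restrict_mem hΩopen.measurableSet] with x hx
    rw [Real.norm_eq_abs, abs_of_nonneg (hF0 x hx)]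
    exact hup x
  have hlowint : Integrable (fun x : EuclideanSpace ℝ (Fin N) => c * Eε * g ‖x‖) :=
    (hgint.const_mul (c * Eε))
  -- main comparison
  have main : ∫ x in Ω, c * Eε * g ‖x‖ ≤ ∫ x in Ω, F x :=
    setIntegral_mono_on hlowint.integrableOn hFint hΩopen.measurableSet hlow
  -- compute the lower integral
  haveI : Nonempty (Fin N) := ⟨⟨0, by omega⟩⟩
  haveI hnt : Nontrivial (EuclideanSpace ℝ (Fin N)) := by
    refine ⟨⟨0, EuclideanSpace.single ⟨0, by omega⟩ 1, fun h => ?_⟩⟩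
    have := congrArg (fun v : EuclideanSpace ℝ (Fin N) => v ⟨0, by omega⟩) h
    simp [EuclideanSpace.single_apply] at this
  have hdim : Module.finrank ℝ (EuclideanSpace ℝ (Fin N)) = N := finrank_euclideanSpace_fin
  set L₀ := Real.log (2 * a * R / ε) with hL₀def
  have hbε2 : Real.log (a * R / (ε/2)) = L₀ := by
    rw [hL₀def]
    congr 1
    field_simp
  have hI1 : ∫ y in Set.Ioi (0:ℝ), y ^ (Module.finrank ℝ (EuclideanSpace ℝ (Fin N)) - 1) • g y
      = -(L₀ ^ (p+1)) / (p+1) := by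
    simp only [smul_eq_mul, hdim]
    rw [setIntegral_congr_fun measurableSet_Ioi
      (fun y _ => hrad (ε/2) hε2pos hε2aR y)]
    rw [MeasureTheory.setIntegral_indicator measurableSet_Ioo,
      Set.inter_eq_right.mpr Set.Ioo_subset_Ioi_self,
      (key1d' (a*R) (ε/2) p haR hε2pos hε2aR hp).2, hbε2]
  have hradial : ∫ x : EuclideanSpace ℝ (Fin N), g ‖x‖ = ωN * (-(L₀ ^ (p+1)) / (p+1)) := by
    rw [integral_fun_norm_addHaar (volume : Measure (EuclideanSpace ℝ (Fin N))) g, hI1]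
    rw [hdim, hωN]
    simp only [nsmul_eq_mul, smul_eq_mul]
    rw [measureReal_def]
    ring
  have hcompl : ∀ x : EuclideanSpace ℝ (Fin N), x ∉ Ω → c * Eε * g ‖x‖ = 0 := by
    intro x hx
    have : ¬ ‖x‖ < ε/2 := by
      intro hcon
      exact hx (hball (mem_ball_zero_iff.2 (by linarith)))
    rw [hgdef, Set.indicator_of_notMem (by simp [Set.mem_Ioo]; intro h; linarith), mul_zero]
  have hsetg : ∫ x in Ω, c * Eε * g ‖x‖ = c * Eε * (ωN * (-(L₀ ^ (p+1)) / (p+1))) := by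
    rw [setIntegral_eq_integral_of_forall_compl_eq_zero hcompl, integral_const_mul, hradial]
  -- final algebra
  have hq : (N:ℝ) * (γ - ((N:ℝ) - 1)/N) = p + 1 := by
    rw [hpdef]
    field_simp
    ring
  have halg : c * Eε * (ωN / N) * L₀ ^ ((N : ℝ) * (γ - ((N : ℝ) - 1) / N)) *
      (((N : ℝ) - 1) / N - γ)⁻¹ = c * Eε * (ωN * (-(L₀ ^ (p+1)) / (p+1))) := by
    rw [hq]
    have hX : (0:ℝ) ≤ L₀ ^ (p+1) := Real.rpow_nonneg
      (Real.log_nonneg (by rw [le_div_iff₀ hε]; nlinarith)) _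
    set X := L₀ ^ (p+1)
    have hβ0 : ((N:ℝ) - 1) / N - γ ≠ 0 := hβ.ne'
    have hNβ : p + 1 = -((N:ℝ) * (((N:ℝ) - 1) / N - γ)) := by
      rw [hpdef]
      field_simp
      ring
    rw [hNβ]
    field_simp
  calc c * Real.exp (-(α₂ ^ ((N : ℝ) / 2) / N) * (ε / 2) ^ N) * (ωN / N) *
        (Real.log (2 * a * R / ε)) ^ ((N : ℝ) * (γ - ((N : ℝ) - 1) / N)) *
        (((N : ℝ) - 1) / N - γ)⁻¹
      = c * Eε * (ωN * (-(L₀ ^ (p+1)) / (p+1))) := halg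
    _ = ∫ x in Ω, c * Eε * g ‖x‖ := hsetg.symm
    _ ≤ ∫ x in Ω, F x := main
end

section
/- Let N = 2 and suppose Ω ⊂ ℝ² is a bounded domain with 0 ∈ Ω, R = sup_{x∈Ω}|x|, a ≥ 1, and A a real 2×2 symmetric positive definite matrix, dμ_A = c·exp(−(1/2)xᵀAx)dx. Then for all u ∈ C_c^1(Ω): (1/4) ∫_Ω |u|² / (|x|²(log(aR/|x|))²) dμ_A ≤ ∫_Ω |∇u·x/|x||² dμ_A + (1/2) ∫_Ω |u|² (xᵀAx) / (|x|²(log(aR/|x|))) dμ_A. -/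
/-!
In polar coordinates the inequality splits into one-dimensional inequalities along the rays
`r ↦ r • ω`. Along a ray write `φ(r) = u(r ω)`, `ψ(r) = ρ(r ω)` and `L(r) = log (a R / r)`; the
Gaussian weight satisfies `ψ' = -r (ωᵀ A ω) ψ`. Completing the square, the radial integrand
`r (φ'² ψ - φ² ψ' / (2 r L) - φ² ψ / (4 r² L²))` equals `ψ (r φ' + φ / (2 L))² / r` minus the
derivative of `φ² ψ / (2 L)`. That derivative integrates to zero over `(0, ∞)`: `1 / L → 0` as
`r → 0`, and `u` vanishes beyond some `R₁ < R ≤ a R`, where `L` is still positive.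
-/

open MeasureTheory Real Set Filter Topology Metric Module

section Geometry

variable {E : Type*} [NormedAddCommGroup E] {Ω : Set E}

theorem bddAbove_image_norm (hΩ : Bornology.IsBounded Ω) : BddAbove ((fun x => ‖x‖) '' Ω) := by
  obtain ⟨C, hC⟩ := hΩ.exists_norm_le
  exact ⟨C, by rintro _ ⟨x, hx, rfl⟩; exact hC x hx⟩

variable [NormedSpace ℝ E] [Nontrivial E]

theorem exists_norm_lt_norm_mem_of_isOpen (hΩ : IsOpen Ω) {x : E} (hx : x ∈ Ω) :
    ∃ y ∈ Ω, ‖x‖ < ‖y‖ := by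
  obtain ⟨ε, hε, hball⟩ := Metric.isOpen_iff.mp hΩ x hx
  rcases eq_or_ne x 0 with rfl | hx0
  · obtain ⟨y, hy⟩ := exists_norm_eq E (half_pos hε).le
    exact ⟨y, hball (by simp [hy, hε]), by simp [hy, hε]⟩
  · have hxn : 0 < ‖x‖ := norm_pos_iff.mpr hx0
    refine ⟨(1 + ε / (2 * ‖x‖)) • x, hball ?_, ?_⟩
    · rw [mem_ball, dist_eq_norm, add_smul, one_smul, add_sub_cancel_left, norm_smul,
        Real.norm_of_nonneg (by positivity)]
      field_simp
      linarith
    · rw [norm_smul, Real.norm_of_nonneg (by positivity), add_mul, one_mul]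
      field_simp
      linarith

theorem norm_lt_sSup_image_norm (hΩ : IsOpen Ω) (hb : Bornology.IsBounded Ω)
    {x : E} (hx : x ∈ Ω) : ‖x‖ < sSup ((fun x => ‖x‖) '' Ω) := by
  obtain ⟨y, hy, hxy⟩ := exists_norm_lt_norm_mem_of_isOpen hΩ hx
  exact hxy.trans_le (le_csSup (bddAbove_image_norm hb) (mem_image_of_mem _ hy))

theorem exists_subset_ball_lt_sSup_image_norm (hΩ : IsOpen Ω)
    (hb : Bornology.IsBounded Ω) (h0 : (0 : E) ∈ Ω) {K : Set E} (hK : IsCompact K)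
    (hKΩ : K ⊆ Ω) :
    ∃ R₁, 0 < R₁ ∧ R₁ < sSup ((fun x => ‖x‖) '' Ω) ∧ K ⊆ ball 0 R₁ := by
  obtain ⟨x₀, hx₀, hmax⟩ := (hK.insert 0).exists_isMaxOn (insert_nonempty 0 K)
    continuous_norm.continuousOn
  have hx₀R := norm_lt_sSup_image_norm hΩ hb (insert_subset h0 hKΩ hx₀)
  have hR := norm_lt_sSup_image_norm hΩ hb h0
  rw [norm_zero] at hR
  refine ⟨(‖x₀‖ + sSup ((fun x => ‖x‖) '' Ω)) / 2, by positivity, by linarith, fun x hx => ?_⟩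
  rw [mem_ball_zero_iff]
  have := hmax (mem_insert_of_mem 0 hx)
  linarith [show ‖x‖ ≤ ‖x₀‖ from this]

end Geometry

theorem integral_nonneg_of_forall_sphere_radial_integral_nonneg
    {E : Type*} [NormedAddCommGroup E] [NormedSpace ℝ E] [FiniteDimensional ℝ E] [Nontrivial E]
    [MeasurableSpace E] [BorelSpace E] (μ : Measure E) [μ.IsAddHaarMeasure] {f : E → ℝ}
    (hray : ∀ ω ∈ sphere (0 : E) 1, 0 ≤ ∫ r in Ioi (0 : ℝ), r ^ (finrank ℝ E - 1) * f (r • ω)) :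
    0 ≤ ∫ x, f x ∂μ := by
  refine (em (Integrable f μ)).elim (fun hf => ?_) fun hf => (integral_undef hf).ge
  set g : sphere (0 : E) 1 × Ioi (0 : ℝ) → ℝ := fun p => f (p.2.1 • p.1.1)
  have hmp := μ.measurePreserving_homeomorphUnitSphereProd
  have hg_comp : g ∘ homeomorphUnitSphereProd E = fun x => f x.1 := by
    funext x
    have hx : ‖x.1‖ ≠ 0 := norm_ne_zero_iff.mpr x.2
    simp [g, smul_smul, mul_inv_cancel₀ hx]
  have hg : Integrable g (μ.toSphere.prod (Measure.volumeIoiPow (finrank ℝ E - 1))) := by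
    rw [← hmp.integrable_comp_emb (Homeomorph.measurableEmbedding _), hg_comp]
    exact (integrableOn_iff_comap_subtypeVal (measurableSet_singleton _).compl).mp hf.integrableOn
  calc (0 : ℝ) ≤ ∫ ω, ∫ r, g (ω, r) ∂(Measure.volumeIoiPow (finrank ℝ E - 1)) ∂μ.toSphere := by
        refine integral_nonneg fun ω => (hray ω.1 ω.2).trans_eq ?_
        simp only [g, Measure.volumeIoiPow, ENNReal.ofReal]
        rw [integral_withDensity_eq_integral_smul
          (measurable_subtype_coe.pow_const _).real_toNNReal,
          integral_subtype_comap measurableSet_Ioi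
            (fun r => Real.toNNReal (r ^ (finrank ℝ E - 1)) • f (r • ω.1))]
        refine setIntegral_congr_fun measurableSet_Ioi fun r hr => ?_
        rw [NNReal.smul_def, Real.coe_toNNReal _ (pow_nonneg (le_of_lt hr) _), smul_eq_mul]
    _ = ∫ p, g p ∂(μ.toSphere.prod (Measure.volumeIoiPow (finrank ℝ E - 1))) :=
        (integral_prod g hg).symm
    _ = ∫ x : ({0}ᶜ : Set E), f x.1 ∂(μ.comap Subtype.val) := by
        rw [← hmp.integral_comp (Homeomorph.measurableEmbedding _), ← hg_comp]; rfl
    _ = ∫ x, f x ∂μ := by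
        rw [integral_subtype_comap (measurableSet_singleton _).compl, restrict_compl_singleton]

theorem integrable_of_norm_le_of_forall_notMem_eq_zero {α : Type*} [MeasurableSpace α]
    {μ : Measure α} {f g : α → ℝ} {s : Set α} (hs : MeasurableSet s) (hg : IntegrableOn g s μ)
    (hf : AEStronglyMeasurable f μ) (hfg : ∀ x ∈ s, ‖f x‖ ≤ g x) (hf0 : ∀ x ∉ s, f x = 0) :
    Integrable f μ :=
  IntegrableOn.integrable_of_forall_notMem_eq_zero
    (hg.mono' hf.restrict (ae_restrict_of_forall_mem hs hfg)) hf0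

section LogWeight

variable {b R₁ : ℝ}

theorem hasDerivAt_log_div (hb : 0 < b) {r : ℝ} (hr : 0 < r) :
    HasDerivAt (fun s => log (b / s)) (-r⁻¹) r := by
  have h := ((hasDerivAt_inv hr.ne').const_mul b).log (by positivity)
  simp only [← div_eq_mul_inv] at h
  convert h using 1
  field_simp

theorem continuousOn_inv_log_div (hb : 0 < b) :
    ContinuousOn (fun r => (log (b / r))⁻¹) (Ico 0 b) := by
  intro r ⟨hr0, hrb⟩
  rcases hr0.eq_or_lt with rfl | hr0
  · have hlim : Tendsto (fun r => (log (b / r))⁻¹) (𝓝[>] 0) (𝓝 0) := by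
      refine (tendsto_log_atTop.comp ?_).inv_tendsto_atTop
      exact (tendsto_inv_nhdsGT_zero.const_mul_atTop hb).congr fun r => (div_eq_mul_inv b r).symm
    have h : ContinuousWithinAt (fun r => (log (b / r))⁻¹) (Ioi 0) 0 := by
      simpa [ContinuousWithinAt] using hlim
    exact (continuousWithinAt_Ioi_iff_Ici.mp h).mono Ico_subset_Ici_self
  · have hL : log (b / r) ≠ 0 := (log_pos ((one_lt_div hr0).mpr hrb)).ne'
    exact ((hasDerivAt_log_div hb hr0).continuousAt.inv₀ hL).continuousWithinAt

theorem integrableOn_inv_mul_log_div_sq (hR₁ : 0 ≤ R₁) (hR₁b : R₁ < b) :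
    IntegrableOn (fun r => (r * log (b / r) ^ 2)⁻¹) (Ioc 0 R₁) := by
  have hb : 0 < b := hR₁.trans_lt hR₁b
  refine intervalIntegral.integrableOn_deriv_of_nonneg
    ((continuousOn_inv_log_div hb).mono (Icc_subset_Ico_right hR₁b)) (fun r hr => ?_)
    (fun r hr => by have := hr.1; positivity)
  have hL : log (b / r) ≠ 0 := (log_pos ((one_lt_div hr.1).mpr (hr.2.trans hR₁b))).ne'
  refine ((hasDerivAt_log_div hb hr.1).inv hL).congr_deriv ?_
  rw [neg_neg, mul_inv, div_eq_mul_inv]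

theorem integrableOn_div_log_div_add (hR₁ : 0 ≤ R₁) (hR₁b : R₁ < b) {A B : ℝ → ℝ}
    (hA : Continuous A) (hB : Continuous B) (hA0 : ∀ r, R₁ < r → A r = 0)
    (hB0 : ∀ r, R₁ < r → B r = 0) :
    IntegrableOn (fun r => A r / log (b / r) + B r / (r * log (b / r) ^ 2)) (Ioi 0) := by
  have hb : 0 < b := hR₁.trans_lt hR₁b
  rw [← Ioc_union_Ioi_eq_Ioi hR₁]
  refine IntegrableOn.union ?_ (integrableOn_zero.congr_fun (fun r hr => ?_) measurableSet_Ioi)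
  · have hinv : ContinuousOn (fun r => (log (b / r))⁻¹) (Icc 0 R₁) :=
      (continuousOn_inv_log_div hb).mono (Icc_subset_Ico_right hR₁b)
    have h₁ : IntegrableOn (fun r => A r * (log (b / r))⁻¹) (Ioc 0 R₁) :=
      ((hA.continuousOn.mul hinv).integrableOn_compact isCompact_Icc).mono_set Ioc_subset_Icc_self
    have h₂ : IntegrableOn (fun r => B r * (r * log (b / r) ^ 2)⁻¹) (Ioc 0 R₁) :=
      IntegrableOn.continuousOn_mul_of_subset hB.continuousOn
        (integrableOn_inv_mul_log_div_sq hR₁ hR₁b) isCompact_Icc measurableSet_Ioc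
        Ioc_subset_Icc_self
    simpa only [div_eq_mul_inv, Pi.add_def] using h₁.add h₂
  · simp [hA0 r hr, hB0 r hr]

theorem integral_deriv_div_log_div_eq_zero (hR₁ : 0 ≤ R₁) (hR₁b : R₁ < b) {A B : ℝ → ℝ}
    (hB : ∀ r, HasDerivAt B (A r) r) (hA : Continuous A) (hA0 : ∀ r, R₁ < r → A r = 0)
    (hB0 : ∀ r, R₁ < r → B r = 0) :
    ∫ r in Ioi 0, (A r / log (b / r) + B r / (r * log (b / r) ^ 2)) = 0 := by
  have hb : 0 < b := hR₁.trans_lt hR₁b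
  have hBc : Continuous B := continuous_iff_continuousAt.mpr fun r => (hB r).continuousAt
  have hzero : ∀ᶠ r in atTop, B r / log (b / r) = 0 :=
    (eventually_gt_atTop R₁).mono fun r hr => by simp [hB0 r hr]
  have hcont : ContinuousWithinAt (fun r => B r / log (b / r)) (Ici 0) 0 := by
    have h := (hBc.continuousWithinAt.mul
      ((continuousOn_inv_log_div hb) 0 ⟨le_rfl, hb⟩)).mono_of_mem_nhdsWithin (Ico_mem_nhdsGE hb)
    simpa only [div_eq_mul_inv, Pi.mul_def] using h
  have hderiv : ∀ r ∈ Ioi (0 : ℝ), HasDerivAt (fun r => B r / log (b / r))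
      (A r / log (b / r) + B r / (r * log (b / r) ^ 2)) r := by
    intro r (hr : 0 < r)
    rcases le_or_gt r R₁ with hrR₁ | hrR₁
    · have hL : log (b / r) ≠ 0 := (log_pos ((one_lt_div hr).mpr (hrR₁.trans_lt hR₁b))).ne'
      refine ((hB r).div (hasDerivAt_log_div hb hr) hL).congr_deriv ?_
      field_simp
      ring
    · have hev : (fun r => B r / log (b / r)) =ᶠ[𝓝 r] fun _ => 0 :=
        (eventually_gt_nhds hrR₁).mono fun s hs => by simp [hB0 s hs]
      simpa [hA0 r hrR₁, hB0 r hrR₁] using (hasDerivAt_const r (0 : ℝ)).congr_of_eventuallyEq hev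
  rw [integral_Ioi_of_hasDerivAt_of_tendsto hcont hderiv
    (integrableOn_div_log_div_add hR₁ hR₁b hA hBc hA0 hB0)
    (tendsto_const_nhds.congr' (EventuallyEq.symm hzero))]
  simp

theorem integral_Ioi_logHardy_nonneg (hR₁ : 0 ≤ R₁) (hR₁b : R₁ < b) {φ φ' ψ ψ' : ℝ → ℝ}
    (hφ : ∀ r, HasDerivAt φ (φ' r) r) (hφ' : Continuous φ') (hψ : ∀ r, HasDerivAt ψ (ψ' r) r)
    (hψ' : Continuous ψ') (hψ0 : ∀ r, 0 ≤ ψ r) (hφ0 : ∀ r, R₁ < r → φ r = 0) :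
    0 ≤ ∫ r in Ioi 0, (r * φ' r ^ 2 * ψ r - φ r ^ 2 * ψ' r / (2 * log (b / r))
      - φ r ^ 2 * ψ r / (4 * r * log (b / r) ^ 2)) := by
  set A : ℝ → ℝ := fun r => φ r * φ' r * ψ r + φ r ^ 2 * ψ' r / 2
  set B : ℝ → ℝ := fun r => φ r ^ 2 * ψ r / 2
  have hφc : Continuous φ := continuous_iff_continuousAt.mpr fun r => (hφ r).continuousAt
  have hψc : Continuous ψ := continuous_iff_continuousAt.mpr fun r => (hψ r).continuousAt
  have hB : ∀ r, HasDerivAt B (A r) r := fun r =>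
    ((((hφ r).pow 2).mul (hψ r)).div_const 2).congr_deriv (by simp only [A, Pi.pow_apply]; ring)
  have hA : Continuous A := by fun_prop
  have hA0 : ∀ r, R₁ < r → A r = 0 := fun r hr => by simp [A, hφ0 r hr]
  have hB0 : ∀ r, R₁ < r → B r = 0 := fun r hr => by simp [B, hφ0 r hr]
  have hsquare : ∀ r ∈ Ioi (0 : ℝ), r * φ' r ^ 2 * ψ r - φ r ^ 2 * ψ' r / (2 * log (b / r))
      - φ r ^ 2 * ψ r / (4 * r * log (b / r) ^ 2)
      = ψ r * (r * φ' r + φ r / (2 * log (b / r))) ^ 2 / r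
        - (A r / log (b / r) + B r / (r * log (b / r) ^ 2)) := by
    intro r (hr : 0 < r)
    by_cases hL : log (b / r) = 0
    · simp only [A, B, hL]
      field_simp
      ring
    · simp only [A, B]
      field_simp
      ring
  have hderiv_int := integrableOn_div_log_div_add hR₁ hR₁b hA
    (continuous_iff_continuousAt.mpr fun r => (hB r).continuousAt) hA0 hB0
  by_cases hsq : IntegrableOn (fun r => ψ r * (r * φ' r + φ r / (2 * log (b / r))) ^ 2 / r) (Ioi 0)
  · rw [setIntegral_congr_fun measurableSet_Ioi hsquare, integral_sub hsq hderiv_int,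
      integral_deriv_div_log_div_eq_zero hR₁ hR₁b hB hA hA0 hB0, sub_zero]
    exact setIntegral_nonneg measurableSet_Ioi fun r (hr : 0 < r) =>
      div_nonneg (mul_nonneg (hψ0 r) (sq_nonneg _)) hr.le
  · refine (integral_undef fun h => hsq ?_).ge
    refine IntegrableOn.congr_fun (h.add hderiv_int) (fun r hr => ?_) measurableSet_Ioi
    simp only [Pi.add_apply, hsquare r hr]
    ring

end LogWeight

theorem integrableOn_ball_inv_norm_sq_mul_log_sq {E : Type*} [NormedAddCommGroup E]
    [NormedSpace ℝ E] [FiniteDimensional ℝ E] [MeasurableSpace E] [BorelSpace E]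
    (μ : Measure E) [μ.IsAddHaarMeasure] (hE : finrank ℝ E = 2) {b R₁ : ℝ} (hR₁ : 0 ≤ R₁)
    (hR₁b : R₁ < b) :
    IntegrableOn (fun x : E => (‖x‖ ^ 2 * log (b / ‖x‖) ^ 2)⁻¹) (ball 0 R₁) μ := by
  have : Nontrivial E := nontrivial_of_finrank_eq_succ hE
  rw [integrableOn_fun_norm_addHaar μ (f := fun r => (r ^ 2 * log (b / r) ^ 2)⁻¹), hE]
  refine ((integrableOn_inv_mul_log_div_sq hR₁ hR₁b).mono_set Ioo_subset_Ioc_self).congr_fun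
    (fun r (hr : r ∈ Ioo 0 R₁) => ?_) measurableSet_Ioo
  have := hr.1.ne'
  simp only [smul_eq_mul, Nat.add_one_sub_one, pow_one]
  field_simp

section QuadraticForm

variable {ι : Type*} [Fintype ι] (A : Matrix ι ι ℝ) (x : EuclideanSpace ℝ ι)

theorem quadForm_smul (r : ℝ) :
    ∑ i, ∑ j, A i j * (r • x) i * (r • x) j = r ^ 2 * ∑ i, ∑ j, A i j * x i * x j := by
  simp only [PiLp.smul_apply, smul_eq_mul, Finset.mul_sum]
  exact Finset.sum_congr rfl fun i _ => Finset.sum_congr rfl fun j _ => by ring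

theorem abs_quadForm_le :
    |∑ i, ∑ j, A i j * x i * x j| ≤ (∑ i, ∑ j, |A i j|) * ‖x‖ ^ 2 := by
  simp only [Finset.sum_mul]
  refine (Finset.abs_sum_le_sum_abs _ _).trans (Finset.sum_le_sum fun i _ => ?_)
  refine (Finset.abs_sum_le_sum_abs _ _).trans (Finset.sum_le_sum fun j _ => ?_)
  have hi : |x i| ≤ ‖x‖ := PiLp.norm_apply_le x i
  have hj : |x j| ≤ ‖x‖ := PiLp.norm_apply_le x j
  rw [abs_mul, abs_mul, mul_assoc, sq]
  exact mul_le_mul_of_nonneg_left (mul_le_mul hi hj (abs_nonneg _) (norm_nonneg _)) (abs_nonneg _)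

end QuadraticForm

section Plane

variable {u ρ : EuclideanSpace ℝ (Fin 2) → ℝ} {b R₁ : ℝ}

theorem integrable_sq_div_norm_sq_mul_log_sq (hu : Continuous u) (hρ : Continuous ρ)
    (hsupp : tsupport u ⊆ ball 0 R₁) (hR₁ : 0 ≤ R₁) (hb : R₁ < b) :
    Integrable (fun x => |u x| ^ 2 / (‖x‖ ^ 2 * log (b / ‖x‖) ^ 2) * ρ x) := by
  obtain ⟨Mu, hMu⟩ := (isCompact_closedBall 0 R₁).exists_bound_of_continuousOn hu.continuousOn
  obtain ⟨Mρ, hMρ⟩ := (isCompact_closedBall 0 R₁).exists_bound_of_continuousOn hρ.continuousOn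
  refine integrable_of_norm_le_of_forall_notMem_eq_zero measurableSet_ball
    ((integrableOn_ball_inv_norm_sq_mul_log_sq volume finrank_euclideanSpace_fin hR₁ hb).const_mul
      (Mu ^ 2 * Mρ)) (Measurable.aestronglyMeasurable (by fun_prop)) (fun x hx => ?_)
    (fun x hx => ?_)
  · have hux := hMu x (ball_subset_closedBall hx)
    have hρx := hMρ x (ball_subset_closedBall hx)
    rw [Real.norm_eq_abs] at hux hρx ⊢
    calc |(|u x| ^ 2 / (‖x‖ ^ 2 * log (b / ‖x‖) ^ 2) * ρ x)|
        = |u x| ^ 2 * (‖x‖ ^ 2 * log (b / ‖x‖) ^ 2)⁻¹ * |ρ x| := by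
          rw [abs_mul, abs_div, abs_of_nonneg (by positivity : (0 : ℝ) ≤ |u x| ^ 2),
            abs_of_nonneg (by positivity : 0 ≤ ‖x‖ ^ 2 * log (b / ‖x‖) ^ 2), div_eq_mul_inv]
      _ ≤ Mu ^ 2 * (‖x‖ ^ 2 * log (b / ‖x‖) ^ 2)⁻¹ * Mρ := by gcongr
      _ = Mu ^ 2 * Mρ * (‖x‖ ^ 2 * log (b / ‖x‖) ^ 2)⁻¹ := by ring
  · simp [image_eq_zero_of_notMem_tsupport fun h => hx (hsupp h)]

theorem integrable_sq_fderiv_radial_mul (hu : ContDiff ℝ 1 u) (hρ : Continuous ρ)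
    (hsupp : tsupport u ⊆ ball 0 R₁) :
    Integrable (fun x => |fderiv ℝ u x (‖x‖⁻¹ • x)| ^ 2 * ρ x) := by
  have hDu := hu.continuous_fderiv one_ne_zero
  obtain ⟨Md, hMd⟩ := (isCompact_closedBall 0 R₁).exists_bound_of_continuousOn hDu.continuousOn
  obtain ⟨Mρ, hMρ⟩ := (isCompact_closedBall 0 R₁).exists_bound_of_continuousOn hρ.continuousOn
  refine integrable_of_norm_le_of_forall_notMem_eq_zero (s := ball 0 R₁) measurableSet_ball
    (integrableOn_const (C := Md ^ 2 * Mρ) measure_ball_lt_top.ne)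
    (Measurable.aestronglyMeasurable (by fun_prop)) (fun x hx => ?_) (fun x hx => ?_)
  · have hunit : ‖‖x‖⁻¹ • x‖ ≤ 1 := by
      rcases eq_or_ne x 0 with rfl | hx0
      · simp
      · rw [norm_smul, norm_inv, norm_norm, inv_mul_cancel₀ (norm_ne_zero_iff.mpr hx0)]
    have hDux : |fderiv ℝ u x (‖x‖⁻¹ • x)| ≤ Md :=
      calc |fderiv ℝ u x (‖x‖⁻¹ • x)| ≤ ‖fderiv ℝ u x‖ * ‖‖x‖⁻¹ • x‖ := (fderiv ℝ u x).le_opNorm _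
        _ ≤ Md * 1 := by
          have hDux := hMd x (ball_subset_closedBall hx)
          exact mul_le_mul hDux hunit (norm_nonneg _) ((norm_nonneg _).trans hDux)
        _ = Md := mul_one Md
    have hρx := hMρ x (ball_subset_closedBall hx)
    rw [Real.norm_eq_abs] at hρx ⊢
    rw [abs_mul, abs_of_nonneg (sq_nonneg _)]
    gcongr
  · simp [fderiv_of_notMem_tsupport ℝ fun h => hx (hsupp h)]

theorem integrable_sq_mul_quadForm_div (A : Matrix (Fin 2) (Fin 2) ℝ) (hu : Continuous u)
    (hρ : Continuous ρ) (hsupp : tsupport u ⊆ ball 0 R₁) (hR₁ : 0 < R₁) (hb : R₁ < b) :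
    Integrable (fun x => |u x| ^ 2 * (∑ i, ∑ j, A i j * x i * x j) / (‖x‖ ^ 2 * log (b / ‖x‖))
      * ρ x) := by
  obtain ⟨Mu, hMu⟩ := (isCompact_closedBall 0 R₁).exists_bound_of_continuousOn hu.continuousOn
  obtain ⟨Mρ, hMρ⟩ := (isCompact_closedBall 0 R₁).exists_bound_of_continuousOn hρ.continuousOn
  set MA := ∑ i, ∑ j, |A i j|
  have hMA : 0 ≤ MA := Finset.sum_nonneg fun i _ => Finset.sum_nonneg fun j _ => abs_nonneg _
  have hL₀ : 0 < log (b / R₁) := log_pos ((one_lt_div hR₁).mpr hb)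
  refine integrable_of_norm_le_of_forall_notMem_eq_zero (s := ball 0 R₁) measurableSet_ball
    (integrableOn_const (C := Mu ^ 2 * MA / log (b / R₁) * Mρ) measure_ball_lt_top.ne)
    (Measurable.aestronglyMeasurable (by fun_prop)) (fun x hx => ?_) (fun x hx => ?_)
  · have hux := hMu x (ball_subset_closedBall hx)
    have hρx := hMρ x (ball_subset_closedBall hx)
    rw [Real.norm_eq_abs] at hux hρx ⊢
    rcases eq_or_ne x 0 with rfl | hx0
    · have : 0 ≤ Mu := (abs_nonneg _).trans hux
      have : 0 ≤ Mρ := (abs_nonneg _).trans hρx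
      simp only [norm_zero, ne_eq, OfNat.ofNat_ne_zero, not_false_eq_true, zero_pow, zero_mul,
        div_zero, abs_zero]
      positivity
    have hxpos : 0 < ‖x‖ := norm_pos_iff.mpr hx0
    have hxR₁ : ‖x‖ < R₁ := mem_ball_zero_iff.mp hx
    have hL : log (b / R₁) ≤ log (b / ‖x‖) :=
      log_le_log (div_pos (hR₁.trans hb) hR₁)
        (div_le_div_of_nonneg_left (hR₁.trans hb).le hxpos hxR₁.le)
    have hLpos : 0 < log (b / ‖x‖) := hL₀.trans_le hL
    calc |(|u x| ^ 2 * (∑ i, ∑ j, A i j * x i * x j) / (‖x‖ ^ 2 * log (b / ‖x‖)) * ρ x)|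
        = |u x| ^ 2 * (|∑ i, ∑ j, A i j * x i * x j| / ‖x‖ ^ 2) / log (b / ‖x‖) * |ρ x| := by
          rw [abs_mul, abs_div, abs_mul, abs_of_nonneg (by positivity : (0 : ℝ) ≤ |u x| ^ 2),
            abs_of_pos (by positivity : 0 < ‖x‖ ^ 2 * log (b / ‖x‖))]
          ring
      _ ≤ Mu ^ 2 * MA / log (b / R₁) * Mρ := by
          have hQx : |∑ i, ∑ j, A i j * x i * x j| / ‖x‖ ^ 2 ≤ MA :=
            div_le_of_le_mul₀ (by positivity) (by positivity) (abs_quadForm_le A x)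
          gcongr
  · simp [image_eq_zero_of_notMem_tsupport fun h => hx (hsupp h)]

variable {A : Matrix (Fin 2) (Fin 2) ℝ} {c : ℝ}

theorem continuous_of_eq_gaussian
    (hρ : ∀ x, ρ x = c * exp (-(1 / 2) * ∑ i, ∑ j, A i j * x i * x j)) : Continuous ρ := by
  rw [funext hρ]
  fun_prop

theorem hasDerivAt_gaussian_comp_smul
    (hρ : ∀ x, ρ x = c * exp (-(1 / 2) * ∑ i, ∑ j, A i j * x i * x j))
    (ω : EuclideanSpace ℝ (Fin 2)) (r : ℝ) :
    HasDerivAt (fun s => ρ (s • ω)) (-(r * ∑ i, ∑ j, A i j * ω i * ω j) * ρ (r • ω)) r := by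
  simp only [hρ, quadForm_smul]
  exact ((((hasDerivAt_pow 2 r).mul_const _).const_mul (-(1 / 2))).exp.const_mul c).congr_deriv
    (by ring)

theorem integral_logHardy_defect_nonneg (hu : ContDiff ℝ 1 u) (hc : 0 ≤ c)
    (hρ : ∀ x, ρ x = c * exp (-(1 / 2) * ∑ i, ∑ j, A i j * x i * x j))
    (hsupp : tsupport u ⊆ ball 0 R₁) (hR₁ : 0 ≤ R₁) (hb : R₁ < b) :
    0 ≤ ∫ x, (|fderiv ℝ u x (‖x‖⁻¹ • x)| ^ 2 * ρ x
      + 1 / 2 * (|u x| ^ 2 * (∑ i, ∑ j, A i j * x i * x j) / (‖x‖ ^ 2 * log (b / ‖x‖)) * ρ x)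
      - 1 / 4 * (|u x| ^ 2 / (‖x‖ ^ 2 * log (b / ‖x‖) ^ 2) * ρ x)) := by
  refine integral_nonneg_of_forall_sphere_radial_integral_nonneg volume fun ω hω => ?_
  rw [mem_sphere_zero_iff_norm] at hω
  have hDu := hu.continuous_fderiv one_ne_zero
  have hρc := continuous_of_eq_gaussian hρ
  have hφ (r : ℝ) : HasDerivAt (fun s => u (s • ω)) (fderiv ℝ u (r • ω) ω) r := by
    have h := ((hu.differentiable one_ne_zero) (r • ω)).hasFDerivAt.comp_hasDerivAt r
      ((hasDerivAt_id r).smul_const ω)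
    rwa [one_smul] at h
  have hφ0 (r : ℝ) (hr : R₁ < r) : u (r • ω) = 0 := by
    refine image_eq_zero_of_notMem_tsupport fun h => ?_
    have := mem_ball_zero_iff.mp (hsupp h)
    rw [norm_smul, hω, mul_one, Real.norm_of_nonneg (hR₁.trans hr.le)] at this
    linarith
  refine (integral_Ioi_logHardy_nonneg hR₁ hb hφ (by fun_prop) (hasDerivAt_gaussian_comp_smul hρ ω)
    (by fun_prop) (fun r => by rw [hρ]; positivity) hφ0).trans_eq
    (setIntegral_congr_fun measurableSet_Ioi fun r (hr : 0 < r) => ?_)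
  have hnorm : ‖r • ω‖ = r := by rw [norm_smul, hω, mul_one, Real.norm_of_nonneg hr.le]
  simp only [hnorm, finrank_euclideanSpace_fin, quadForm_smul, smul_smul, inv_mul_cancel₀ hr.ne',
    one_smul, sq_abs, Nat.add_one_sub_one, pow_one]
  by_cases hL : log (b / r) = 0
  · simp only [hL]
    field_simp
    ring
  · field_simp
    ring

theorem logHardy_inequality (hu : ContDiff ℝ 1 u) (hc : 0 ≤ c)
    (hρ : ∀ x, ρ x = c * exp (-(1 / 2) * ∑ i, ∑ j, A i j * x i * x j))
    (hsupp : tsupport u ⊆ ball 0 R₁) (hR₁ : 0 < R₁) (hb : R₁ < b) :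
    1 / 4 * ∫ x, |u x| ^ 2 / (‖x‖ ^ 2 * log (b / ‖x‖) ^ 2) * ρ x ≤
      (∫ x, |fderiv ℝ u x (‖x‖⁻¹ • x)| ^ 2 * ρ x) +
      1 / 2 * ∫ x, |u x| ^ 2 * (∑ i, ∑ j, A i j * x i * x j) / (‖x‖ ^ 2 * log (b / ‖x‖)) * ρ x := by
  have hρc := continuous_of_eq_gaussian hρ
  have hI := integrable_sq_div_norm_sq_mul_log_sq hu.continuous hρc hsupp hR₁.le hb
  have hK := integrable_sq_fderiv_radial_mul hu hρc hsupp
  have hJ := integrable_sq_mul_quadForm_div A hu.continuous hρc hsupp hR₁ hb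
  have hsplit := integral_sub (hK.add (hJ.const_mul (1 / 2))) (hI.const_mul (1 / 4))
  simp only [Pi.add_apply] at hsplit
  have hdefect := integral_logHardy_defect_nonneg hu hc hρ hsupp hR₁.le hb
  rw [hsplit, integral_add hK (hJ.const_mul _), integral_const_mul, integral_const_mul] at hdefect
  linarith

end Plane

theorem stmt_17_general
    (Ω : Set (EuclideanSpace ℝ (Fin 2))) (hΩopen : IsOpen Ω)
    (hΩbdd : Bornology.IsBounded Ω) (h0 : (0 : EuclideanSpace ℝ (Fin 2)) ∈ Ω)
    (R : ℝ) (hR : R = sSup ((fun x => ‖x‖) '' Ω))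
    (a : ℝ) (ha : 1 ≤ a)
    (A : Matrix (Fin 2) (Fin 2) ℝ)
    (c : ℝ) (hc : 0 < c)
    (ρ : EuclideanSpace ℝ (Fin 2) → ℝ)
    (hρ : ∀ x, ρ x = c * Real.exp (-(1 / 2) * ∑ i, ∑ j, A i j * x i * x j))
    (u : EuclideanSpace ℝ (Fin 2) → ℝ)
    (hu : ContDiff ℝ 1 u) (husupp : HasCompactSupport u) (huΩ : tsupport u ⊆ Ω) :
    (1 / 4) * ∫ x in Ω, |u x| ^ 2 / (‖x‖ ^ 2 * (Real.log (a * R / ‖x‖)) ^ 2) * ρ x ≤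
      (∫ x in Ω, |fderiv ℝ u x ((‖x‖)⁻¹ • x)| ^ 2 * ρ x) +
      (1 / 2) * ∫ x in Ω, |u x| ^ 2 * (∑ i, ∑ j, A i j * x i * x j) /
        (‖x‖ ^ 2 * Real.log (a * R / ‖x‖)) * ρ x := by
  obtain ⟨R₁, hR₁, hR₁R, hsupp⟩ :=
    exists_subset_ball_lt_sSup_image_norm hΩopen hΩbdd h0 husupp huΩ
  rw [← hR] at hR₁R
  have hb : R₁ < a * R := hR₁R.trans_le (le_mul_of_one_le_left (hR₁.trans hR₁R).le ha)
  have hu0 (x : EuclideanSpace ℝ (Fin 2)) (hx : x ∉ Ω) : u x = 0 :=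
    image_eq_zero_of_notMem_tsupport fun h => hx (huΩ h)
  have hDu0 (x : EuclideanSpace ℝ (Fin 2)) (hx : x ∉ Ω) : fderiv ℝ u x = 0 :=
    fderiv_of_notMem_tsupport ℝ fun h => hx (huΩ h)
  rw [setIntegral_eq_integral_of_forall_compl_eq_zero fun x hx => by simp [hu0 x hx],
    setIntegral_eq_integral_of_forall_compl_eq_zero fun x hx => by simp [hDu0 x hx],
    setIntegral_eq_integral_of_forall_compl_eq_zero fun x hx => by simp [hu0 x hx]]
  exact logHardy_inequality hu hc.le hρ hsupp hR₁ hb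

theorem stmt_17
    (Ω : Set (EuclideanSpace ℝ (Fin 2))) (hΩopen : IsOpen Ω) (hΩconn : IsConnected Ω)
    (hΩbdd : Bornology.IsBounded Ω) (h0 : (0 : EuclideanSpace ℝ (Fin 2)) ∈ Ω)
    (R : ℝ) (hR : R = sSup ((fun x => ‖x‖) '' Ω))
    (a : ℝ) (ha : 1 ≤ a)
    (A : Matrix (Fin 2) (Fin 2) ℝ) (hAsymm : A.IsSymm) (hA : A.PosDef)
    (c : ℝ) (hc : 0 < c)
    (ρ : EuclideanSpace ℝ (Fin 2) → ℝ)
    (hρ : ∀ x, ρ x = c * Real.exp (-(1 / 2) * ∑ i, ∑ j, A i j * x i * x j))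
    (u : EuclideanSpace ℝ (Fin 2) → ℝ)
    (hu : ContDiff ℝ 1 u) (husupp : HasCompactSupport u) (huΩ : tsupport u ⊆ Ω) :
    (1 / 4) * ∫ x in Ω, |u x| ^ 2 / (‖x‖ ^ 2 * (Real.log (a * R / ‖x‖)) ^ 2) * ρ x ≤
      (∫ x in Ω, |fderiv ℝ u x ((‖x‖)⁻¹ • x)| ^ 2 * ρ x) +
      (1 / 2) * ∫ x in Ω, |u x| ^ 2 * (∑ i, ∑ j, A i j * x i * x j) /
        (‖x‖ ^ 2 * Real.log (a * R / ‖x‖)) * ρ x :=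
  stmt_17_general Ω hΩopen hΩbdd h0 R hR a ha A c hc ρ hρ u hu husupp huΩ
end
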